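/- Let A ∈ ℝ^{n×n} be invertible, B ∈ ℝ^{n×m}, b ∈ ℝⁿ, c ∈ ℝⁿ, and let f : ℝ → ℝ be differentiable. Define φ(θ) = (A + diag(Bθ))⁻¹ b and a(θ) = (A + diag(Bθ))⁻ᵀ c on the set of θ where A + diag(Bθ) is invertible. Then at any such θ, the gradient of θ ↦ f(cᵀ φ(θ)) is -f'(cᵀ φ(θ)) · Bᵀ (φ(θ) ⊙ a(θ)), where ⊙ denotes the entrywise (Hadamard) product of vectors. -/

import Mathlib

open Matrix

attribute [local instance] Matrix.linftyOpNormedAddCommGroup Matrix.linftyOpNormedRing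
  Matrix.linftyOpNormedAlgebra

private noncomputable def Mlin' {n m : ℕ} (B : Matrix (Fin n) (Fin m) ℝ) :
    EuclideanSpace ℝ (Fin m) →L[ℝ] Matrix (Fin n) (Fin n) ℝ :=
  LinearMap.toContinuousLinearMap
    { toFun := fun θ => Matrix.diagonal (B.mulVec θ)
      map_add' := fun x y => by
        ext i j
        by_cases h : i = j <;>
          simp [diagonal, h, mulVec, dotProduct, PiLp.add_apply, mul_add, Finset.sum_add_distrib]
      map_smul' := fun r x => by
        ext i j
        by_cases h : i = j <;>
          simp [diagonal, h, mulVec, dotProduct, PiLp.smul_apply, smul_eq_mul, Finset.mul_sum,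
            mul_left_comm] }

private noncomputable def slin' {n : ℕ} (b c : Fin n → ℝ) :
    Matrix (Fin n) (Fin n) ℝ →L[ℝ] ℝ :=
  LinearMap.toContinuousLinearMap
    { toFun := fun N => c ⬝ᵥ N.mulVec b
      map_add' := fun x y => by simp [Matrix.add_mulVec, dotProduct_add]
      map_smul' := fun r x => by simp [Matrix.smul_mulVec, dotProduct_smul] }

private theorem keylem' {n m : ℕ} (P : Matrix (Fin n) (Fin n) ℝ) (B : Matrix (Fin n) (Fin m) ℝ)
    (b c : Fin n → ℝ) (w : Fin m → ℝ) :
    c ⬝ᵥ (P * Matrix.diagonal (B.mulVec w) * P).mulVec b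
      = ∑ i, Bᵀ.mulVec (fun k => P.mulVec b k * Pᵀ.mulVec c k) i * w i := by
  rw [← mulVec_mulVec, ← mulVec_mulVec, dotProduct_mulVec, ← mulVec_transpose]
  simp only [mulVec_diagonal, dotProduct]
  simp only [mulVec, dotProduct, Finset.sum_mul, Finset.mul_sum, transpose_apply]
  refine (Finset.sum_congr rfl fun x _ => Finset.sum_comm).trans ?_
  rw [Finset.sum_comm]
  refine Finset.sum_congr rfl fun p _ => Finset.sum_congr rfl fun q _ => ?_
  rw [Finset.sum_comm]
  exact Finset.sum_congr rfl fun r _ => Finset.sum_congr rfl fun s _ => by ring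

private theorem hmain' {n m : ℕ} (A : Matrix (Fin n) (Fin n) ℝ) (B : Matrix (Fin n) (Fin m) ℝ)
    (b c : Fin n → ℝ) (θ₀ : EuclideanSpace ℝ (Fin m))
    (hinv : IsUnit (A + Matrix.diagonal (B.mulVec θ₀)).det) :
    HasFDerivAt (fun θ : EuclideanSpace ℝ (Fin m) =>
        c ⬝ᵥ (Ring.inverse (A + Matrix.diagonal (B.mulVec θ))).mulVec b)
      ((slin' b c).comp (((-(ContinuousLinearMap.mulLeftRight ℝ _
          (A + Matrix.diagonal (B.mulVec θ₀))⁻¹ (A + Matrix.diagonal (B.mulVec θ₀))⁻¹)).comp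
          (Mlin' B)))) θ₀ := by
  haveI : CompleteSpace (Matrix (Fin n) (Fin n) ℝ) := FiniteDimensional.complete ℝ _
  obtain ⟨u, hu⟩ := (Matrix.isUnit_iff_isUnit_det _).mpr hinv
  have hM : HasFDerivAt (fun θ : EuclideanSpace ℝ (Fin m) =>
      A + Matrix.diagonal (B.mulVec θ)) (Mlin' B) θ₀ :=
    ((Mlin' B).hasFDerivAt).const_add A
  have hI : HasFDerivAt (Ring.inverse : Matrix (Fin n) (Fin n) ℝ → _)
      (-(ContinuousLinearMap.mulLeftRight ℝ _ ↑u⁻¹ ↑u⁻¹)) (A + Matrix.diagonal (B.mulVec θ₀)) := by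
    rw [← hu]; exact hasFDerivAt_ringInverse u
  have h2 := ((slin' b c).hasFDerivAt).comp _ (hI.comp θ₀ hM)
  have hinv' : (↑u⁻¹ : Matrix (Fin n) (Fin n) ℝ) = (A + Matrix.diagonal (B.mulVec θ₀))⁻¹ := by
    rw [← Ring.inverse_unit, ← Matrix.nonsing_inv_eq_ringInverse, hu]
  rw [hinv'] at h2
  exact h2

/-- The adjoint-method gradient formula for physical design problems:
the gradient of `θ ↦ f(cᵀ (A + diag(Bθ))⁻¹ b)` at a point `θ₀` where
`A + diag(Bθ₀)` is invertible equals `-f'(cᵀ φ(θ₀)) • Bᵀ (φ(θ₀) ⊙ a(θ₀))`,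
where `φ(θ) = (A + diag(Bθ))⁻¹ b` and `a(θ) = (A + diag(Bθ))⁻ᵀ c`. -/
theorem stmt_6 {n m : ℕ} (A : Matrix (Fin n) (Fin n) ℝ) (B : Matrix (Fin n) (Fin m) ℝ)
    (b c : Fin n → ℝ) (f f' : ℝ → ℝ)
    (hf : ∀ t, HasDerivAt f (f' t) t)
    (φ : (Fin m → ℝ) → (Fin n → ℝ))
    (hφ : ∀ θ, φ θ = (A + Matrix.diagonal (B.mulVec θ))⁻¹.mulVec b)
    (a : (Fin m → ℝ) → (Fin n → ℝ))
    (ha : ∀ θ, a θ = ((A + Matrix.diagonal (B.mulVec θ))ᵀ)⁻¹.mulVec c)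
    (θ₀ : EuclideanSpace ℝ (Fin m))
    (hinv : IsUnit (A + Matrix.diagonal (B.mulVec θ₀)).det) :
    gradient (fun θ : EuclideanSpace ℝ (Fin m) => f (c ⬝ᵥ φ θ)) θ₀ =
      fun i => -f' (c ⬝ᵥ φ θ₀) * Bᵀ.mulVec (fun j => φ θ₀ j * a θ₀ j) i := by
  set P : Matrix (Fin n) (Fin n) ℝ := (A + Matrix.diagonal (B.mulVec θ₀))⁻¹ with hP
  have hφ₀ : φ θ₀ = P.mulVec b := hφ θ₀
  have ha₀ : a θ₀ = Pᵀ.mulVec c := by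
    rw [ha θ₀, hP, Matrix.transpose_nonsing_inv]
  have hfun : (fun θ : EuclideanSpace ℝ (Fin m) => f (c ⬝ᵥ φ θ)) =
      fun θ : EuclideanSpace ℝ (Fin m) =>
        f (c ⬝ᵥ (Ring.inverse (A + Matrix.diagonal (B.mulVec θ))).mulVec b) := by
    funext θ
    rw [hφ θ, Matrix.nonsing_inv_eq_ringInverse]
  have ht : c ⬝ᵥ φ θ₀ = c ⬝ᵥ (Ring.inverse (A + Matrix.diagonal (B.mulVec θ₀))).mulVec b := by
    rw [hφ θ₀, Matrix.nonsing_inv_eq_ringInverse]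
  have hD := (hf _).comp_hasFDerivAt θ₀ (hmain' A B b c θ₀ hinv)
  have hgrad : HasGradientAt (fun θ : EuclideanSpace ℝ (Fin m) => f (c ⬝ᵥ φ θ))
      ((WithLp.toLp 2 (fun i => -f' (c ⬝ᵥ φ θ₀) * Bᵀ.mulVec (fun j => φ θ₀ j * a θ₀ j) i) :
        EuclideanSpace ℝ (Fin m))) θ₀ := by
    rw [hasGradientAt_iff_hasFDerivAt, hfun]
    refine hD.congr_fderiv ?_
    symm
    ext v
    simp only [InnerProductSpace.toDual_apply_apply, PiLp.inner_apply, RCLike.inner_apply,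
      starRingEnd_apply, star_trivial, ContinuousLinearMap.coe_smul', Pi.smul_apply,
      ContinuousLinearMap.coe_comp', Function.comp_apply, ContinuousLinearMap.neg_apply,
      ContinuousLinearMap.mulLeftRight_apply, smul_eq_mul]
    rw [← ht]
    have hMlin : (Mlin' B) v = Matrix.diagonal (B.mulVec v) := rfl
    have hslin : ∀ N : Matrix (Fin n) (Fin n) ℝ, (slin' b c) N = c ⬝ᵥ N.mulVec b := fun _ => rfl
    change _ = f' (c ⬝ᵥ φ θ₀) * (c ⬝ᵥ (-(P * Matrix.diagonal (B.mulVec v) * P)).mulVec b)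
    have : -(P * Matrix.diagonal (B.mulVec v) * P) = -(P * (Matrix.diagonal (B.mulVec v) * P)) := by
      rw [mul_assoc]
    rw [this, Matrix.neg_mulVec, dotProduct_neg, ← mul_assoc, keylem' P B b c v]
    rw [hφ₀, ha₀, mul_neg, Finset.mul_sum, ← Finset.sum_neg_distrib]
    exact Finset.sum_congr rfl fun i _ => by ring
  exact congrArg WithLp.ofLp hgrad.gradient
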